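/- arXiv:2404.19620 — 2 statements merged into one kernel-verified Lean document; each statement's English description precedes it below -/
import Mathlib

section
/- Let (Ω, ℙ) be a finite probability space, x, o, g random variables with o ∈ {0,1} and g taking finitely many values, and δ_g an integrable random variable for each value g of the treatment representation. If g is conditionally independent of o given x, then for each g, E[ E[δ_g | x] · ℙ(g' = g | x) ] = E[ E[δ_g | x] · ℙ(g' = g | x, o = 1) ], where g' denotes the random representation. Consequently the weighted sums over g (with any weights π(g) ≥ 0 summing to 1) agree. -/
open Finset

/-- Expectation on a finite probability space with mass function `p`. -/
noncomputable def Ex {Ω : Type*} [Fintype Ω] (p : Ω → ℝ) (f : Ω → ℝ) : ℝ :=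
  ∑ ω, p ω * f ω

/-- Probability of an event. -/
noncomputable def Pr {Ω : Type*} [Fintype Ω] (p : Ω → ℝ) (A : Set Ω) : ℝ :=
  ∑ ω, A.indicator p ω

/-- Conditional expectation of `f` given the event `A`. -/
noncomputable def CExp {Ω : Type*} [Fintype Ω] (p : Ω → ℝ) (f : Ω → ℝ) (A : Set Ω) : ℝ :=
  (∑ ω, A.indicator (fun ω' => p ω' * f ω') ω) / Pr p A

/-- Conditional probability of `B` given `A`. -/
noncomputable def CPr {Ω : Type*} [Fintype Ω] (p : Ω → ℝ) (B A : Set Ω) : ℝ :=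
  Pr p (B ∩ A) / Pr p A

/-- Theorem 2(a): if the treatment representation `g'` is conditionally independent
of the exposure `o` given `x`, then for every representation value `g`,
`E[E[δ_g|x]·ℙ(g'=g|x)] = E[E[δ_g|x]·ℙ(g'=g|x,o=1)]`, and hence the `π`-weighted
sums over `g` agree. -/
theorem stmt_7 {Ω XC G : Type*} [Fintype Ω] [Fintype XC] [Fintype G]
    (p : Ω → ℝ) (hp0 : ∀ ω, 0 ≤ p ω) (hp1 : ∑ ω, p ω = 1)
    (x : Ω → XC) (o : Ω → Bool) (g' : Ω → G) (δ : G → Ω → ℝ)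
    (hxpos : ∀ ω, 0 < Pr p {ω' | x ω' = x ω})
    (hxopos : ∀ ω, 0 < Pr p {ω' | x ω' = x ω ∧ o ω' = true})
    (hCI : ∀ (ω : Ω) (z : G) (b : Bool),
      Pr p {ω' | g' ω' = z ∧ o ω' = b ∧ x ω' = x ω} * Pr p {ω' | x ω' = x ω}
        = Pr p {ω' | g' ω' = z ∧ x ω' = x ω} * Pr p {ω' | o ω' = b ∧ x ω' = x ω}) :
    (∀ z : G,
      Ex p (fun ω => CExp p (δ z) {ω' | x ω' = x ω} * CPr p {ω' | g' ω' = z} {ω' | x ω' = x ω})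
        = Ex p (fun ω => CExp p (δ z) {ω' | x ω' = x ω}
            * CPr p {ω' | g' ω' = z} {ω' | x ω' = x ω ∧ o ω' = true})) ∧
    (∀ π : G → ℝ, (∀ z, 0 ≤ π z) → (∑ z, π z = 1) →
      (∑ z, π z * Ex p (fun ω => CExp p (δ z) {ω' | x ω' = x ω}
          * CPr p {ω' | g' ω' = z} {ω' | x ω' = x ω}))
        = ∑ z, π z * Ex p (fun ω => CExp p (δ z) {ω' | x ω' = x ω}
            * CPr p {ω' | g' ω' = z} {ω' | x ω' = x ω ∧ o ω' = true})) := by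
  have key : ∀ (z : G) (ω : Ω),
      CPr p {ω' | g' ω' = z} {ω' | x ω' = x ω}
        = CPr p {ω' | g' ω' = z} {ω' | x ω' = x ω ∧ o ω' = true} := by
    intro z ω
    have h1 := hCI ω z true
    have e1 : ({ω' | g' ω' = z} ∩ {ω' | x ω' = x ω} : Set Ω)
        = {ω' | g' ω' = z ∧ x ω' = x ω} := by ext ω'; simp [Set.mem_inter_iff]
    have e2 : ({ω' | g' ω' = z} ∩ {ω' | x ω' = x ω ∧ o ω' = true} : Set Ω)
        = {ω' | g' ω' = z ∧ o ω' = true ∧ x ω' = x ω} := by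
      ext ω'; simp [Set.mem_inter_iff]; tauto
    have e3 : ({ω' | o ω' = true ∧ x ω' = x ω} : Set Ω)
        = {ω' | x ω' = x ω ∧ o ω' = true} := by ext ω'; simp; tauto
    rw [e3] at h1
    unfold CPr
    rw [e1, e2]
    rw [div_eq_div_iff (hxpos ω).ne' (hxopos ω).ne']
    linarith [h1]
  have first : ∀ z : G,
      Ex p (fun ω => CExp p (δ z) {ω' | x ω' = x ω} * CPr p {ω' | g' ω' = z} {ω' | x ω' = x ω})
        = Ex p (fun ω => CExp p (δ z) {ω' | x ω' = x ω}
            * CPr p {ω' | g' ω' = z} {ω' | x ω' = x ω ∧ o ω' = true}) := by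
    intro z
    unfold Ex
    exact Finset.sum_congr rfl (fun ω _ => by simp only [key z ω])
  refine ⟨first, fun π _ _ => Finset.sum_congr rfl (fun z _ => by rw [first z])⟩
end

section
/- Under the hypotheses of the discrete IPS unbiasedness statement, and additionally given any x-measurable 'imputation' random variable δ̂_g, the doubly robust estimand E[ δ̂_g + 1{o = 1, g' = g}·(δ_g − δ̂_g)/p(g) ] equals E[δ_g]. -/
open Finset

lemma indicator_sum_filter {Ω : Type*} [Fintype Ω] (S : Set Ω) (h : Ω → ℝ)
    (s : Finset Ω) (hs : ∀ ω ∈ S, ω ∈ s) :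
    (∑ ω, S.indicator h ω) = ∑ ω ∈ s, S.indicator h ω := by
  classical
  refine (Finset.sum_subset (Finset.subset_univ s) ?_).symm
  intro ω _ hω
  exact Set.indicator_of_notMem (fun hmem => hω (hs ω hmem)) h

/-- Key IPS lemma: if the conditional-independence identity holds for `f`,
then inverse-propensity weighting is unbiased. -/
lemma key_ips {Ω XC : Type*} [Fintype Ω] [Fintype XC] (p : Ω → ℝ)
    (x : Ω → XC) (A : Set Ω) (f : Ω → ℝ)
    (hCI : ∀ v : XC,
      (∑ ω, Set.indicator ({ω' | x ω' = v} ∩ A) (fun ω' => p ω' * f ω') ω)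
          * Pr p {ω' | x ω' = v}
        = (∑ ω, Set.indicator {ω' | x ω' = v} (fun ω' => p ω' * f ω') ω)
            * Pr p ({ω' | x ω' = v} ∩ A))
    (hpos : ∀ ω, 0 < Pr p ({ω' | x ω' = x ω} ∩ A)) :
    Ex p (fun ω => A.indicator (fun _ => (1:ℝ)) ω * f ω / CPr p A {ω' | x ω' = x ω})
      = Ex p f := by
  classical
  unfold Ex
  rw [← Finset.sum_fiberwise Finset.univ x
      (fun ω => p ω * (A.indicator (fun _ => (1:ℝ)) ω * f ω
        / CPr p A {ω' | x ω' = x ω})),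
      ← Finset.sum_fiberwise Finset.univ x (fun ω => p ω * f ω)]
  refine Finset.sum_congr rfl fun v _ => ?_
  by_cases hv : ∃ ω0, x ω0 = v
  · obtain ⟨ω0, hω0⟩ := hv
    have hPA : 0 < Pr p ({ω' | x ω' = v} ∩ A) := hω0 ▸ hpos ω0
    set C : ℝ := CPr p A {ω' | x ω' = v} with hC
    set PA : ℝ := Pr p ({ω' | x ω' = v} ∩ A) with hPAdef
    set PX : ℝ := Pr p {ω' | x ω' = v} with hPXdef
    have hCval : C = PA / PX := by
      rw [hC, CPr, hPAdef, hPXdef, Set.inter_comm]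
    have hSeq : (∑ ω, Set.indicator ({ω' | x ω' = v} ∩ A) (fun ω' => p ω' * f ω') ω)
        = ∑ ω ∈ Finset.univ.filter (fun ω => x ω = v),
            p ω * (A.indicator (fun _ => (1:ℝ)) ω * f ω) := by
      rw [indicator_sum_filter _ _ (Finset.univ.filter (fun ω => x ω = v))
        (fun ω hω => by simpa using hω.1)]
      refine Finset.sum_congr rfl fun ω hω => ?_
      have hxv : x ω = v := by simpa using hω
      by_cases hA : ω ∈ A
      · have hm : ω ∈ ({ω' | x ω' = v} ∩ A) := ⟨hxv, hA⟩
        rw [Set.indicator_of_mem hm, Set.indicator_of_mem hA]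
        ring
      · rw [Set.indicator_of_notMem (fun h => hA h.2),
          Set.indicator_of_notMem hA]
        ring
    have hTeq : (∑ ω, Set.indicator {ω' | x ω' = v} (fun ω' => p ω' * f ω') ω)
        = ∑ ω ∈ Finset.univ.filter (fun ω => x ω = v), p ω * f ω := by
      rw [indicator_sum_filter _ _ (Finset.univ.filter (fun ω => x ω = v))
        (fun ω hω => by simpa using hω)]
      refine Finset.sum_congr rfl fun ω hω => ?_
      exact Set.indicator_of_mem (by simpa using hω) _
    set S : ℝ := ∑ ω ∈ Finset.univ.filter (fun ω => x ω = v),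
        p ω * (A.indicator (fun _ => (1:ℝ)) ω * f ω) with hSdef
    set T : ℝ := ∑ ω ∈ Finset.univ.filter (fun ω => x ω = v), p ω * f ω with hTdef
    have hCIv : S * PX = T * PA := by
      rw [← hSeq, ← hTeq]; exact hCI v
    have hfsum : (∑ ω ∈ Finset.univ.filter (fun ω => x ω = v),
        p ω * (A.indicator (fun _ => (1:ℝ)) ω * f ω / CPr p A {ω' | x ω' = x ω}))
        = S / C := by
      rw [hSdef, Finset.sum_div]
      refine Finset.sum_congr rfl fun ω hω => ?_
      have hxv : x ω = v := by simpa using hω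
      rw [hxv, ← hC]
      ring
    rw [hfsum, hCval, div_div_eq_mul_div]
    rw [div_eq_iff (ne_of_gt hPA)]
    linarith [hCIv]
  · push_neg at hv
    have hemp : Finset.univ.filter (fun ω => x ω = v) = ∅ := by
      apply Finset.filter_eq_empty_iff.mpr
      intro ω _; exact hv ω
    rw [hemp]
    simp

/-- Unbiasedness of the doubly robust estimator with correct joint propensities:
for any `x`-measurable imputation `δ̂_g`,
`E[δ̂_g + 1{o=1, g'=g}·(δ_g − δ̂_g)/p(g)] = E[δ_g]`. -/
theorem stmt_10 {Ω XC G : Type*} [Fintype Ω] [Fintype XC] [Fintype G]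
    (p : Ω → ℝ) (hp0 : ∀ ω, 0 ≤ p ω) (hp1 : ∑ ω, p ω = 1)
    (x : Ω → XC) (o : Ω → Bool) (g' : Ω → G) (z : G) (δz δhat : Ω → ℝ)
    (hδb : ∃ M : ℝ, ∀ ω, |δz ω| ≤ M)
    (hδhatx : ∀ ω ω', x ω = x ω' → δhat ω = δhat ω')
    (hxpos : ∀ ω, 0 < Pr p {ω' | x ω' = x ω})
    (hpz : ∀ ω, 0 < CPr p {ω' | o ω' = true ∧ g' ω' = z} {ω' | x ω' = x ω})
    (hCI : ∀ (v : XC) (b : Bool) (z' : G),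
      (∑ ω, Set.indicator {ω' | x ω' = v ∧ o ω' = b ∧ g' ω' = z'}
          (fun ω' => p ω' * δz ω') ω) * Pr p {ω' | x ω' = v}
        = (∑ ω, Set.indicator {ω' | x ω' = v} (fun ω' => p ω' * δz ω') ω)
            * Pr p {ω' | x ω' = v ∧ o ω' = b ∧ g' ω' = z'}) :
    Ex p (fun ω => δhat ω
        + Set.indicator {ω' | o ω' = true ∧ g' ω' = z} (fun _ => (1:ℝ)) ω
            * (δz ω - δhat ω) / CPr p {ω' | o ω' = true ∧ g' ω' = z} {ω' | x ω' = x ω})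
      = Ex p δz := by
  classical
  set A : Set Ω := {ω' | o ω' = true ∧ g' ω' = z} with hA
  have hset : ∀ v : XC, {ω' | x ω' = v ∧ o ω' = true ∧ g' ω' = z}
      = {ω' | x ω' = v} ∩ A := by
    intro v; ext ω; simp [hA, Set.mem_setOf_eq, and_assoc]
  -- positivity of joint probabilities
  have hpos : ∀ ω, 0 < Pr p ({ω' | x ω' = x ω} ∩ A) := by
    intro ω
    have h1 := hpz ω
    have h2 := hxpos ω
    rw [CPr] at h1
    have : Pr p (A ∩ {ω' | x ω' = x ω})
        = CPr p A {ω' | x ω' = x ω} * Pr p {ω' | x ω' = x ω} := by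
      rw [CPr, div_mul_cancel₀ _ (ne_of_gt h2)]
    rw [Set.inter_comm]
    rw [this, CPr]
    exact mul_pos h1 h2
  -- CI identity for δhat (x-measurable)
  have hCIhat : ∀ v : XC,
      (∑ ω, Set.indicator ({ω' | x ω' = v} ∩ A) (fun ω' => p ω' * δhat ω') ω)
          * Pr p {ω' | x ω' = v}
        = (∑ ω, Set.indicator {ω' | x ω' = v} (fun ω' => p ω' * δhat ω') ω)
            * Pr p ({ω' | x ω' = v} ∩ A) := by
    intro v
    by_cases hv : ∃ ω0, x ω0 = v
    · obtain ⟨ω0, hω0⟩ := hv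
      have h1 : (∑ ω, Set.indicator ({ω' | x ω' = v} ∩ A) (fun ω' => p ω' * δhat ω') ω)
          = δhat ω0 * Pr p ({ω' | x ω' = v} ∩ A) := by
        rw [Pr, Finset.mul_sum]
        refine Finset.sum_congr rfl fun ω _ => ?_
        by_cases hm : ω ∈ ({ω' | x ω' = v} ∩ A : Set Ω)
        · rw [Set.indicator_of_mem hm, Set.indicator_of_mem hm]
          have : δhat ω = δhat ω0 := hδhatx ω ω0 (by rw [hm.1, hω0])
          rw [this]; ring
        · rw [Set.indicator_of_notMem hm, Set.indicator_of_notMem hm]; ring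
      have h2 : (∑ ω, Set.indicator {ω' | x ω' = v} (fun ω' => p ω' * δhat ω') ω)
          = δhat ω0 * Pr p {ω' | x ω' = v} := by
        rw [Pr, Finset.mul_sum]
        refine Finset.sum_congr rfl fun ω _ => ?_
        by_cases hm : ω ∈ ({ω' | x ω' = v} : Set Ω)
        · rw [Set.indicator_of_mem hm, Set.indicator_of_mem hm]
          have : δhat ω = δhat ω0 := hδhatx ω ω0 (by rw [Set.mem_setOf_eq.mp hm, hω0])
          rw [this]; ring
        · rw [Set.indicator_of_notMem hm, Set.indicator_of_notMem hm]; ring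
      rw [h1, h2]; ring
    · push_neg at hv
      have h1 : (∑ ω, Set.indicator ({ω' | x ω' = v} ∩ A) (fun ω' => p ω' * δhat ω') ω) = 0 := by
        refine Finset.sum_eq_zero fun ω _ => ?_
        exact Set.indicator_of_notMem (fun hm => hv ω hm.1) _
      have h2 : (∑ ω, Set.indicator {ω' | x ω' = v} (fun ω' => p ω' * δhat ω') ω) = 0 := by
        refine Finset.sum_eq_zero fun ω _ => ?_
        exact Set.indicator_of_notMem (show ω ∉ {ω' | x ω' = v} from hv ω) _
      rw [h1, h2]; ring
  -- CI identity for f := δz - δhat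
  set f : Ω → ℝ := fun ω => δz ω - δhat ω with hf
  have hCIf : ∀ v : XC,
      (∑ ω, Set.indicator ({ω' | x ω' = v} ∩ A) (fun ω' => p ω' * f ω') ω)
          * Pr p {ω' | x ω' = v}
        = (∑ ω, Set.indicator {ω' | x ω' = v} (fun ω' => p ω' * f ω') ω)
            * Pr p ({ω' | x ω' = v} ∩ A) := by
    intro v
    have hz := hCI v true z
    rw [hset v] at hz
    have hh := hCIhat v
    have e1 : ∀ (S : Set Ω), (∑ ω, Set.indicator S (fun ω' => p ω' * f ω') ω)
        = (∑ ω, Set.indicator S (fun ω' => p ω' * δz ω') ω)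
          - (∑ ω, Set.indicator S (fun ω' => p ω' * δhat ω') ω) := by
      intro S
      rw [← Finset.sum_sub_distrib]
      refine Finset.sum_congr rfl fun ω _ => ?_
      by_cases hm : ω ∈ S
      · rw [Set.indicator_of_mem hm, Set.indicator_of_mem hm,
          Set.indicator_of_mem hm]
        simp only [hf]; ring
      · rw [Set.indicator_of_notMem hm, Set.indicator_of_notMem hm,
          Set.indicator_of_notMem hm]
        ring
    rw [e1, e1, sub_mul, sub_mul, hz, hh]
  -- apply the key lemma
  have hkey := key_ips p x A f hCIf hpos
  have hlin : ∀ (u w : Ω → ℝ), Ex p (fun ω => u ω + w ω) = Ex p u + Ex p w := by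
    intro u w
    unfold Ex
    rw [← Finset.sum_add_distrib]
    refine Finset.sum_congr rfl fun ω _ => ?_
    ring
  have hsplit : Ex p (fun ω => δhat ω
      + Set.indicator A (fun _ => (1:ℝ)) ω * (δz ω - δhat ω)
          / CPr p A {ω' | x ω' = x ω})
      = Ex p δhat + Ex p (fun ω => Set.indicator A (fun _ => (1:ℝ)) ω * f ω
          / CPr p A {ω' | x ω' = x ω}) := by
    exact hlin δhat _
  rw [hsplit, hkey]
  have hlinf : Ex p f = Ex p δz - Ex p δhat := by
    unfold Ex
    rw [← Finset.sum_sub_distrib]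
    refine Finset.sum_congr rfl fun ω _ => ?_
    simp only [hf]; ring
  rw [hlinf]
  ring
end
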